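/- For all natural numbers n ≥ 0, the factor complexity of the Thue–Morse sequence satisfies f_t(16n+15) = 2·f_t(8n+2) − 6·f_t(8n+4) + 6·f_t(8n+6) (as an identity of integers). -/

import Mathlib

/-!
Since `t (2k) = t k` and `t (2k + 1) = 1 - t k`, the block of length `L ≥ 1` of `t` at position
`2i + p` (`p ∈ {0, 1}`) and the block of length `(L + p + 1) / 2` at position `i` determine each
other. For `L ≥ 4` no block occurs both at an even and at an odd position, as that would force
`t k = t (k + 1) = t (k + 2)`, which the same relations forbid. Splitting the blocks by the parity
of their position thus gives `f (2m) = f m + f (m + 1)` and `f (2m + 1) = 2 f (m + 1)` for `m ≥ 2`,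
and both sides of the identity unfold to `2 f (2n + 2) + 6 f (2n + 3)`. The term `f (8n + 2)`,
which escapes the recurrence at `n = 0`, enters through `f (8n + 2) + 2 f (2n + 2) = 3 f (4n + 2)`,
true for every `n`.
-/

/-- The Thue–Morse sequence: `tm n` is the parity of the number of 1s in the
binary representation of `n`. -/
def tm (n : ℕ) : ℕ := (Nat.digits 2 n).sum % 2

/-- The factor complexity of the Thue–Morse sequence: the number of distinct
blocks of length `n` occurring in it. -/
noncomputable def tmComplexity (n : ℕ) : ℕ :=
  Set.ncard {w : Fin n → ℕ | ∃ i : ℕ, ∀ j : Fin n, w j = tm (i + j)}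

open Set

theorem Set.ncard_range_eq_of_eq_iff {ι α β : Type*} {g : ι → α} {h : ι → β}
    (H : ∀ i j, g i = g j ↔ h i = h j) : (range g).ncard = (range h).ncard := by
  rw [← Nat.card_coe_set_eq, ← Nat.card_coe_set_eq]
  exact Nat.card_congr <| (Setoid.quotientKerEquivRange g).symm.trans <|
    (Quotient.congrRight fun i j => H i j).trans (Setoid.quotientKerEquivRange h)

theorem Set.range_eq_range_two_mul_union_range_two_mul_add_one {α : Type*} (f : ℕ → α) :
    range f = range (fun k => f (2 * k)) ∪ range (fun k => f (2 * k + 1)) := by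
  ext x
  simp only [mem_union, mem_range]
  constructor
  · rintro ⟨i, rfl⟩
    obtain ⟨k, rfl | rfl⟩ := Nat.even_or_odd' i
    exacts [.inl ⟨k, rfl⟩, .inr ⟨k, rfl⟩]
  · rintro (⟨k, rfl⟩ | ⟨k, rfl⟩) <;> exact ⟨_, rfl⟩

namespace ThueMorse

theorem tm_le_one (n : ℕ) : tm n ≤ 1 :=
  Nat.le_of_lt_succ (Nat.mod_lt _ two_pos)

theorem tm_eq_tm_div_two_add_mod_two (n : ℕ) : tm n = (tm (n / 2) + n) % 2 := by
  rcases n.eq_zero_or_pos with rfl | hn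
  · rfl
  · unfold tm
    rw [Nat.digits_def' one_lt_two hn, List.sum_cons]
    omega

theorem tm_two_mul_add (n r : ℕ) : tm (2 * n + r) = (tm (n + r / 2) + r) % 2 := by
  rw [tm_eq_tm_div_two_add_mod_two, show (2 * n + r) / 2 = n + r / 2 by omega]
  omega

theorem tm_two_mul (n : ℕ) : tm (2 * n) = tm n := by
  rw [tm_eq_tm_div_two_add_mod_two, show 2 * n / 2 = n by omega]
  have := tm_le_one n
  omega

theorem tm_two_mul_add_one (n : ℕ) : tm (2 * n + 1) = 1 - tm n := by
  rw [tm_eq_tm_div_two_add_mod_two, show (2 * n + 1) / 2 = n by omega]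
  have := tm_le_one n
  omega

theorem not_tm_eq_and_tm_eq (k : ℕ) : ¬(tm k = tm (k + 1) ∧ tm (k + 1) = tm (k + 2)) := by
  rintro ⟨h₁, h₂⟩
  obtain ⟨a, rfl | rfl⟩ := Nat.even_or_odd' k
  · rw [tm_two_mul, tm_two_mul_add_one] at h₁
    have := tm_le_one a
    omega
  · rw [show 2 * a + 1 + 1 = 2 * (a + 1) by ring, show 2 * a + 1 + 2 = 2 * (a + 1) + 1 by ring,
      tm_two_mul, tm_two_mul_add_one] at h₂
    have := tm_le_one (a + 1)
    omega

def block (n i : ℕ) : Fin n → ℕ := fun j => tm (i + j)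

theorem block_eq_block_iff {n a b : ℕ} :
    block n a = block n b ↔ ∀ j < n, tm (a + j) = tm (b + j) := by
  simp only [funext_iff, Fin.forall_iff, block]

theorem tmComplexity_eq_ncard_range_block (n : ℕ) : tmComplexity n = (range (block n)).ncard := by
  unfold tmComplexity
  congr 1
  ext w
  simp only [mem_ofPred_eq, mem_range, funext_iff, block, eq_comm]

theorem finite_range_block (n : ℕ) : (range (block n)).Finite :=
  (Set.Finite.pi fun _ => Set.finite_Iic 1).subset <| by
    rintro _ ⟨i, rfl⟩ j -
    exact tm_le_one _

theorem block_two_mul_add_eq_iff {p L : ℕ} (hp : p < 2) (hL : 0 < L) (i i' : ℕ) :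
    block L (2 * i + p) = block L (2 * i' + p) ↔
      block ((L + p + 1) / 2) i = block ((L + p + 1) / 2) i' := by
  have expand : ∀ a j, tm (2 * a + p + j) = (tm (a + (p + j) / 2) + (p + j)) % 2 := fun a j => by
    rw [add_assoc, tm_two_mul_add]
  simp only [block_eq_block_iff, expand]
  constructor
  · intro h q hq
    -- a position `j < L` of the long block that reads position `q` of the short one
    have hj := h (min (2 * q + 1 - p) (L - 1)) (by omega)
    rw [show (p + min (2 * q + 1 - p) (L - 1)) / 2 = q by omega] at hj
    have := tm_le_one (i + q)
    have := tm_le_one (i' + q)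
    omega
  · intro h j hj
    rw [h _ (by omega)]

theorem block_two_mul_ne_block_two_mul_add_one {L : ℕ} (hL : 4 ≤ L) (i k : ℕ) :
    block L (2 * i) ≠ block L (2 * k + 1) := by
  intro h
  have expand (j : ℕ) (hj : j < 4) :
      (tm (i + j / 2) + j) % 2 = (tm (k + (1 + j) / 2) + (1 + j)) % 2 := by
    have hj := block_eq_block_iff.1 h j (by omega)
    rwa [add_assoc, tm_two_mul_add, tm_two_mul_add] at hj
  have h₀ := expand 0 (by norm_num)
  have h₁ := expand 1 (by norm_num)
  have h₂ := expand 2 (by norm_num)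
  have h₃ := expand 3 (by norm_num)
  norm_num at h₀ h₁ h₂ h₃
  have := tm_le_one i
  have := tm_le_one (i + 1)
  have := tm_le_one k
  have := tm_le_one (k + 1)
  have := tm_le_one (k + 2)
  exact not_tm_eq_and_tm_eq k ⟨by omega, by omega⟩

theorem tmComplexity_eq_add {L : ℕ} (hL : 4 ≤ L) :
    tmComplexity L = tmComplexity ((L + 1) / 2) + tmComplexity (L / 2 + 1) := by
  have count (p : ℕ) (hp : p < 2) :
      (range fun i => block L (2 * i + p)).ncard = tmComplexity ((L + p + 1) / 2) := by
    rw [tmComplexity_eq_ncard_range_block]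
    exact ncard_range_eq_of_eq_iff (block_two_mul_add_eq_iff hp (by omega))
  have finite (f : ℕ → ℕ) : (range fun i => block L (f i)).Finite :=
    (finite_range_block L).subset (range_comp_subset_range f (block L))
  rw [tmComplexity_eq_ncard_range_block, range_eq_range_two_mul_union_range_two_mul_add_one,
    ncard_union_eq _ (finite _) (finite _)]
  have count₀ := count 0 (by norm_num)
  simp only [add_zero] at count₀
  rw [count₀, count 1 (by norm_num), show (L + 1 + 1) / 2 = L / 2 + 1 by omega]
  exact disjoint_range_iff.2 (block_two_mul_ne_block_two_mul_add_one hL)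

theorem tmComplexity_two_mul {m : ℕ} (hm : 2 ≤ m) :
    tmComplexity (2 * m) = tmComplexity m + tmComplexity (m + 1) := by
  rw [tmComplexity_eq_add (by omega), show (2 * m + 1) / 2 = m by omega,
    show 2 * m / 2 = m by omega]

theorem tmComplexity_two_mul_add_one {m : ℕ} (hm : 2 ≤ m) :
    tmComplexity (2 * m + 1) = 2 * tmComplexity (m + 1) := by
  rw [tmComplexity_eq_add (by omega), show (2 * m + 1 + 1) / 2 = m + 1 by omega,
    show (2 * m + 1) / 2 = m by omega, two_mul]

theorem tmComplexity_eight_mul_add_two (n : ℕ) :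
    tmComplexity (8 * n + 2) + 2 * tmComplexity (2 * n + 2) = 3 * tmComplexity (4 * n + 2) := by
  rcases n.eq_zero_or_pos with rfl | hn
  · ring
  have h₈ := tmComplexity_two_mul (m := 4 * n + 1) (by omega)
  have h₄ := tmComplexity_two_mul_add_one (m := 2 * n) (by omega)
  have h₄' := tmComplexity_two_mul (m := 2 * n + 1) (by omega)
  ring_nf at *
  omega

end ThueMorse

open ThueMorse in
theorem stmt_19 (n : ℕ) :
    (tmComplexity (16 * n + 15) : ℤ) =
      2 * tmComplexity (8 * n + 2) - 6 * tmComplexity (8 * n + 4)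
        + 6 * tmComplexity (8 * n + 6) := by
  have h₁₆ := tmComplexity_two_mul_add_one (m := 8 * n + 7) (by omega)
  have h₈ := tmComplexity_two_mul (m := 4 * n + 4) (by omega)
  have h₈' := tmComplexity_two_mul (m := 4 * n + 3) (by omega)
  have h₈'' := tmComplexity_two_mul (m := 4 * n + 2) (by omega)
  have h₄ := tmComplexity_two_mul_add_one (m := 2 * n + 2) (by omega)
  have h₄' := tmComplexity_two_mul (m := 2 * n + 2) (by omega)
  have h₂ := tmComplexity_eight_mul_add_two n
  ring_nf at *
  omega
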